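/- arXiv:1911.07282 — 4 statements merged into one kernel-verified Lean document; each statement's English description precedes it below -/
import Mathlib

section
/- Let n ≥ 2 be an integer and let P : ℝ → ℝ be a C² function with P(0) = P'(0) = 0 satisfying P''(w)/(1+P'(w)²) + (n−1)·P'(w)/w = 1 for all w ≠ 0. Then P is an even function, and P(w) = w²/(2n) + o(w²) as w → 0. -/
open Filter Topology Asymptotics

lemma bowl_odd_aux (c : ℝ) (hc : 0 ≤ c) (u : ℝ → ℝ)
    (hud : Differentiable ℝ u) (huc : Continuous u) (hu0 : u 0 = 0)
    (hode : ∀ w : ℝ, w ≠ 0 → deriv u w = (1 + u w ^ 2) * (1 - c * u w / w)) :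
    ∀ w : ℝ, u (-w) = - u w := by
  -- derivative of x ↦ -u(-x)
  have hv : ∀ w : ℝ, HasDerivAt (fun x : ℝ => -u (-x)) (deriv u (-w)) w := by
    intro w
    have h1 : HasDerivAt (fun x : ℝ => -x) (-1 : ℝ) w := (hasDerivAt_id w).neg
    have h2 := ((hud (-w)).hasDerivAt.comp w h1).neg
    exact h2.congr_deriv (by ring)
  have key : ∀ x : ℝ, 0 < x → u (-x) = - u x := by
    intro w0 hw0
    set D : ℝ → ℝ := fun x => u x + u (-x) with hD
    obtain ⟨M, hM⟩ := (isCompact_Icc (a := (0:ℝ)) (b := w0)).exists_bound_of_continuousOn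
      (f := fun x => u x - u (-x)) ((huc.sub (huc.comp continuous_neg)).continuousOn)
    have hM0 : 0 ≤ M := le_trans (norm_nonneg _) (hM 0 ⟨le_rfl, hw0.le⟩)
    set K : ℝ := 2 * M + 1 with hK
    set ψ : ℝ → ℝ := fun x => (D x) ^ 2 * Real.exp (-K * x) with hψ
    have hDdiff : ∀ x : ℝ, HasDerivAt D (deriv u x - deriv u (-x)) x := by
      intro x
      have := ((hud x).hasDerivAt.sub (hv x))
      refine this.congr_of_eventuallyEq (Filter.Eventually.of_forall fun y => ?_)
      simp [hD]
    have hψdiff : ∀ x : ℝ, HasDerivAt ψ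
        ((2 * D x ^ 1 * (deriv u x - deriv u (-x))) * Real.exp (-K * x)
          + (D x) ^ 2 * (Real.exp (-K * x) * -K)) x := by
      intro x
      have hexp : HasDerivAt (fun x : ℝ => Real.exp (-K * x)) (Real.exp (-K * x) * -K) x := by
        simpa using (((hasDerivAt_id x).const_mul (-K)).exp)
      exact ((hDdiff x).pow 2).mul hexp
    have hanti : AntitoneOn ψ (Set.Icc 0 w0) := by
      apply antitoneOn_of_deriv_nonpos (convex_Icc _ _)
      · exact (Continuous.continuousOn (by
          have : Continuous D := (huc.add (huc.comp continuous_neg))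
          exact (this.pow 2).mul ((continuous_const.mul continuous_id).rexp)))
      · intro x _
        exact (hψdiff x).differentiableAt.differentiableWithinAt
      · intro x hx
        rw [interior_Icc] at hx
        rw [(hψdiff x).deriv]
        set a := u x with ha
        set b := u (-x) with hb
        have hxne : x ≠ 0 := ne_of_gt hx.1
        have hDx : D x = a + b := rfl
        have hd1 : deriv u x = (1 + a ^ 2) * (1 - c * a / x) := hode x hxne
        have hd2 : deriv u (-x) = (1 + b ^ 2) * (1 + c * b / x) := by
          rw [hode (-x) (neg_ne_zero.mpr hxne), ← hb, div_neg, sub_neg_eq_add]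
        have hid : 2 * D x ^ 1 * (deriv u x - deriv u (-x))
            = 2 * (a + b) ^ 2 * (a - b) - (2 * c / x) * ((a + b) ^ 2 * (1 + a ^ 2 - a * b + b ^ 2)) := by
          rw [hDx, hd1, hd2]
          field_simp
          ring
        have habs : a - b ≤ M := by
          have := hM x ⟨hx.1.le, hx.2.le⟩
          have := (abs_le.mp (by simpa [Real.norm_eq_abs] using this)).2
          simpa using this
        have hterm2 : 0 ≤ (2 * c / x) * ((a + b) ^ 2 * (1 + a ^ 2 - a * b + b ^ 2)) := by
          apply mul_nonneg
          · exact div_nonneg (by linarith) hx.1.le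
          · apply mul_nonneg (sq_nonneg _)
            nlinarith [sq_nonneg (a - b), sq_nonneg (a + b)]
        have hterm1 : 2 * (a + b) ^ 2 * (a - b) ≤ K * (a + b) ^ 2 := by
          nlinarith [sq_nonneg (a + b)]
        have hmain : 2 * D x ^ 1 * (deriv u x - deriv u (-x)) ≤ K * D x ^ 2 := by
          rw [hid, hDx]
          nlinarith
        have hexp_pos : 0 < Real.exp (-K * x) := Real.exp_pos _
        nlinarith [sq_nonneg (D x), mul_le_mul_of_nonneg_right hmain hexp_pos.le]
    have h0 : ψ 0 = 0 := by simp [hψ, hD, hu0]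
    have hle : ψ w0 ≤ 0 := by
      have := hanti (Set.left_mem_Icc.mpr hw0.le) (Set.right_mem_Icc.mpr hw0.le) hw0.le
      simpa [h0] using this
    have hge : 0 ≤ ψ w0 := mul_nonneg (sq_nonneg _) (Real.exp_pos _).le
    have : D w0 ^ 2 * Real.exp (-K * w0) = 0 := le_antisymm hle hge
    have hD0 : D w0 = 0 := by
      have := mul_eq_zero.mp this
      rcases this with h | h
      · exact (pow_eq_zero_iff two_ne_zero).mp h
      · exact absurd h (Real.exp_pos _).ne'
    have : u w0 + u (-w0) = 0 := hD0
    linarith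
  intro w
  rcases lt_trichotomy w 0 with h | h | h
  · have := key (-w) (by linarith)
    simp only [neg_neg] at this
    linarith
  · simp [h, hu0]
  · exact key w h


/-- Let `n ≥ 2` be an integer and let `P : ℝ → ℝ` be a `C²` function with
`P 0 = P' 0 = 0` satisfying `P''(w)/(1+P'(w)²) + (n−1)·P'(w)/w = 1` for all `w ≠ 0`.
Then `P` is an even function, and `P w = w²/(2n) + o(w²)` as `w → 0`. -/
theorem bowl_soliton_even_and_small_asymptotics
    (n : ℕ) (hn : 2 ≤ n) (P : ℝ → ℝ)
    (hP : ContDiff ℝ 2 P) (hP0 : P 0 = 0) (hP0' : deriv P 0 = 0)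
    (hODE : ∀ w : ℝ, w ≠ 0 →
      deriv (deriv P) w / (1 + (deriv P w) ^ 2) + ((n : ℝ) - 1) * deriv P w / w = 1) :
    (∀ w : ℝ, P (-w) = P w) ∧
      (fun w : ℝ => P w - w ^ 2 / (2 * (n : ℝ))) =o[𝓝 0] (fun w : ℝ => w ^ 2) := by
  have hnR : (0:ℝ) < n := by positivity
  set c : ℝ := (n : ℝ) - 1 with hc_def
  have hc : 0 ≤ c := by
    have : (2:ℝ) ≤ n := by exact_mod_cast hn
    simp only [hc_def]; linarith
  set u : ℝ → ℝ := deriv P with hu_def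
  have hP2 : ContDiff ℝ ((1 : WithTop ℕ∞) + 1) P := by
    have : ((2:ℕ) : WithTop ℕ∞) = (1 : WithTop ℕ∞) + 1 := by norm_num
    rw [← this]; exact_mod_cast hP
  have h1 := contDiff_succ_iff_deriv.mp hP2
  have hPd : Differentiable ℝ P := h1.1
  have hu1 : ContDiff ℝ 1 u := h1.2.2
  have hud : Differentiable ℝ u := hu1.differentiable one_ne_zero
  have huc : Continuous u := hu1.continuous
  have hu'c : Continuous (deriv u) := (contDiff_one_iff_deriv.mp hu1).2
  -- explicit ODE
  have hode : ∀ w : ℝ, w ≠ 0 → deriv u w = (1 + u w ^ 2) * (1 - c * u w / w) := by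
    intro w hw
    have h := hODE w hw
    have hpos : (0:ℝ) < 1 + u w ^ 2 := by positivity
    have h2 : deriv u w / (1 + u w ^ 2) = 1 - c * u w / w := by
      rw [hc_def]; linarith
    calc deriv u w = (deriv u w / (1 + u w ^ 2)) * (1 + u w ^ 2) := by
          field_simp
      _ = (1 - c * u w / w) * (1 + u w ^ 2) := by rw [h2]
      _ = (1 + u w ^ 2) * (1 - c * u w / w) := by ring
  -- slope limit
  have hslope : Tendsto (fun w => u w / w) (𝓝[≠] (0:ℝ)) (𝓝 (deriv u 0)) := by
    have h := (hud 0).hasDerivAt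
    rw [hasDerivAt_iff_tendsto_slope] at h
    apply h.congr'
    filter_upwards [self_mem_nhdsWithin] with x hx
    simp [slope_def_field, hP0']
  -- compute deriv u 0 = 1/n
  have hu'0 : deriv u 0 = 1 / n := by
    have hlim : Tendsto (fun w => deriv u w / (1 + u w ^ 2) + c * (u w / w)) (𝓝[≠] (0:ℝ))
        (𝓝 (deriv u 0 / (1 + u 0 ^ 2) + c * deriv u 0)) := by
      apply Tendsto.add
      · apply Tendsto.div
        · exact (hu'c.tendsto 0).mono_left nhdsWithin_le_nhds
        · exact ((continuous_const.add ((huc.pow 2))).tendsto 0).mono_left nhdsWithin_le_nhds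
        · simp [hP0']
      · exact tendsto_const_nhds.mul hslope
    have hone : Tendsto (fun w => deriv u w / (1 + u w ^ 2) + c * (u w / w)) (𝓝[≠] (0:ℝ)) (𝓝 1) := by
      apply Tendsto.congr' _ tendsto_const_nhds
      filter_upwards [self_mem_nhdsWithin] with x hx
      have := hODE x hx
      rw [hc_def, mul_div_assoc] at this
      exact this.symm
    have := tendsto_nhds_unique hlim hone
    rw [hP0'] at this
    simp only [hc_def] at this
    have hne : (n:ℝ) ≠ 0 := ne_of_gt hnR
    field_simp at this ⊢
    linarith
  -- oddness of u
  have hodd : ∀ w : ℝ, u (-w) = - u w :=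
    bowl_odd_aux c hc u hud huc hP0' hode
  constructor
  · -- evenness of P
    have hg : ∀ w : ℝ, HasDerivAt (fun x => P (-x) - P x) 0 w := by
      intro w
      have h1 : HasDerivAt (fun x : ℝ => -x) (-1 : ℝ) w := (hasDerivAt_id w).neg
      have h2 := (hPd (-w)).hasDerivAt.comp w h1
      have h3 := h2.sub (hPd w).hasDerivAt
      have : deriv P (-w) * (-1) - deriv P w = 0 := by
        have := hodd w
        simp only [← hu_def] at *
        linarith
      rw [this] at h3
      exact h3
    intro w
    have := is_const_of_deriv_eq_zero (f := fun x => P (-x) - P x)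
      (fun x => (hg x).differentiableAt) (fun x => (hg x).deriv) w 0
    simp [hP0] at this
    linarith
  · -- little-o asymptotics
    have hne : (n:ℝ) ≠ 0 := ne_of_gt hnR
    set f : ℝ → ℝ := fun w => P w - w ^ 2 / (2 * (n : ℝ)) with hf_def
    have hf0 : f 0 = 0 := by simp [hf_def, hP0]
    have hf' : ∀ x : ℝ, HasDerivAt f (u x - x / n) x := by
      intro x
      have h1 : HasDerivAt (fun w : ℝ => w ^ 2 / (2 * (n:ℝ))) (2 * x ^ 1 / (2 * (n:ℝ))) x :=
        (hasDerivAt_pow 2 x).div_const _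
      have h2 := (hPd x).hasDerivAt.sub h1
      have : deriv P x - 2 * x ^ 1 / (2 * (n:ℝ)) = u x - x / n := by
        rw [← hu_def]; field_simp
      rw [this] at h2
      exact h2
    have hdiv : Tendsto (fun x => (u x - x / n) / (2 * x)) (𝓝[≠] (0:ℝ)) (𝓝 0) := by
      have h2 : Tendsto (fun x => (u x / x - 1 / n) / 2) (𝓝[≠] (0:ℝ)) (𝓝 0) := by
        have := (hslope.sub_const (1 / n)).div_const 2
        rw [hu'0] at this
        simpa using this
      apply Tendsto.congr' _ h2
      filter_upwards [self_mem_nhdsWithin] with x hx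
      have hx' : x ≠ 0 := hx
      field_simp
    have hlh : Tendsto (fun x => f x / x ^ 2) (𝓝[≠] (0:ℝ)) (𝓝 0) := by
      apply HasDerivAt.lhopital_zero_nhdsNE (f' := fun x => u x - x / n) (g' := fun x => 2 * x)
      · filter_upwards with x; exact hf' x
      · filter_upwards with x
        simpa using ((hasDerivAt_pow 2 x))
      · filter_upwards [self_mem_nhdsWithin] with x hx
        simpa using (hx : x ≠ 0)
      · have : Continuous f := by
          have : Continuous P := hP.continuous
          fun_prop
        have := (this.tendsto 0).mono_left (nhdsWithin_le_nhds (s := {(0:ℝ)}ᶜ))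
        rw [hf0] at this
        exact this
      · have := ((continuous_pow 2).tendsto (0:ℝ)).mono_left (nhdsWithin_le_nhds (s := {(0:ℝ)}ᶜ))
        simpa using this
      · exact hdiv
    have hfull : Tendsto (fun x => f x / x ^ 2) (𝓝 (0:ℝ)) (𝓝 0) := by
      have hsup : Tendsto (fun x => f x / x ^ 2) (𝓝[≠] (0:ℝ) ⊔ pure 0) (𝓝 0) := by
        rw [tendsto_sup]
        refine ⟨hlh, ?_⟩
        have hp := tendsto_pure_nhds (fun x => f x / x ^ 2) 0
        have hz : f 0 / (0:ℝ) ^ 2 = 0 := by rw [hf0]; simp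
        rwa [hz] at hp
      rwa [nhdsNE_sup_pure] at hsup
    rw [isLittleO_iff_tendsto]
    · exact hfull
    · intro x hx
      have : x = 0 := by
        have := pow_eq_zero_iff (n := 2) two_ne_zero |>.mp hx
        exact this
      rw [this, hf0]
end

section
/- Let n ≥ 2 be an integer, a > 0 and c > a·log(2n−2), and set λ̄(φ) := −1/(c − a·log(2n−2−φ²)) for 0 < φ < √(2(n−1)). Then for all 0 < φ < √(2(n−1)): (i) ((n−1)/φ − φ/2)·λ̄'(φ) − a·λ̄(φ)² = 0; (ii) the quantity Λ(φ) := −(λ̄''(φ) − 2λ̄'(φ)²/λ̄(φ))/(λ̄'(φ)²/λ̄(φ)⁴) equals −((2n−2+φ²)/(2aφ²))·λ̄(φ)², and in particular Λ(φ) < 0; (iii) for every constant C₁, the function ψ(φ) := λ̄(φ)²·(1/a + C₁·(2n−2−φ²) + ((2n−2−φ²)/(4a(n−1)))·(log(φ²) − log(2n−2−φ²))) satisfies the ODE (2a·λ̄(φ) − 1)·ψ(φ) − ((n−1)/φ − φ/2)·ψ'(φ) = Λ(φ). -/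
open Filter Topology

set_option maxHeartbeats 1000000 in
private lemma psi_aux_ext (a N φ G C₁ L1 L2 : ℝ) (ha : a ≠ 0) (hφ : φ ≠ 0) (hG : G ≠ 0)
    (hU : 2*N-2-φ^2 ≠ 0) (hN1 : N-1 ≠ 0) :
  (2*a*(-1/G) - 1) * ((-1/G)^2 * (1/a + C₁*(2*N-2-φ^2) + (2*N-2-φ^2)/(4*a*(N-1))*(L1-L2)))
  - ((N-1)/φ - φ/2) * ( 2*(-1/G)^1 * (2*a*φ/((2*N-2-φ^2)*G^2)) * (1/a + C₁*(2*N-2-φ^2) + (2*N-2-φ^2)/(4*a*(N-1))*(L1-L2))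
      + (-1/G)^2 * (C₁*(-(2*φ)) + ((-(2*φ)/(4*a*(N-1)))*(L1-L2) + (2*N-2-φ^2)/(4*a*(N-1))*(2*φ^1/(φ^2) - -(2*φ)/(2*N-2-φ^2)))) )
  = -((2*N-2+φ^2)/(2*a*φ^2)) * (-1/G)^2 := by
  obtain ⟨U, rfl⟩ : ∃ U, N = (U+2+φ^2)/2 := ⟨2*N-2-φ^2, by ring⟩
  rw [show 2*((U+2+φ^2)/2)-2-φ^2 = U by ring] at *
  have hN1' : U + φ^2 ≠ 0 := by contrapose! hN1; linarith
  field_simp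
  linear_combination (-4*G*U^2) * mul_inv_cancel₀ hN1'

set_option maxHeartbeats 1000000 in
private lemma lam2_aux_ext (a N φ G : ℝ) (ha : a ≠ 0) (hφ : φ ≠ 0) (hG : G ≠ 0)
    (hU : 2*N-2-φ^2 ≠ 0) :
  -(2*a*((2*N-2-φ^2) * G + 2*φ^2*G - 4*a*φ^2)/((2*N-2-φ^2)^2*G^3)
      - 2 * (2*a*φ/((2*N-2-φ^2) * G^2))^2 / (-1/G)) /
    ((2*a*φ/((2*N-2-φ^2) * G^2))^2 / (-1/G)^4)
  = -((2*N-2+φ^2)/(2*a*φ^2)) * (-1/G)^2 := by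
  have h1 : 2*a*φ/((2*N-2-φ^2) * G^2) ≠ 0 := by
    apply div_ne_zero
    · positivity
    · exact mul_ne_zero hU (pow_ne_zero 2 hG)
  obtain ⟨U, rfl⟩ : ∃ U, N = (U+2+φ^2)/2 := ⟨2*N-2-φ^2, by ring⟩
  rw [show 2*((U+2+φ^2)/2)-2-φ^2 = U by ring] at *
  field_simp
  ring

set_option maxHeartbeats 1000000 in
/-- Properties of the exterior formal profile
`λ̄(φ) = −1/(c − a·log(2n−2−φ²))` on `0 < φ < √(2(n−1))`: it solves the exterior ODE,
the quantity `Λ` has the stated explicit form and is negative, and for every `C₁` the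
correction `ψ` solves the linear ODE `(2a·λ̄ − 1)·ψ − ((n−1)/φ − φ/2)·ψ' = Λ`. -/
theorem exterior_profile_properties
    (n : ℕ) (hn : 2 ≤ n) (a c : ℝ) (ha : 0 < a)
    (hc : a * Real.log (2 * (n : ℝ) - 2) < c)
    (lam : ℝ → ℝ)
    (hlam : lam = fun φ => -1 / (c - a * Real.log (2 * (n : ℝ) - 2 - φ ^ 2)))
    (Lam : ℝ → ℝ)
    (hLam : Lam = fun φ =>
      -(deriv (deriv lam) φ - 2 * (deriv lam φ) ^ 2 / lam φ) /
        ((deriv lam φ) ^ 2 / (lam φ) ^ 4)) :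
    ∀ φ : ℝ, 0 < φ → φ < Real.sqrt (2 * ((n : ℝ) - 1)) →
      ((((n : ℝ) - 1) / φ - φ / 2) * deriv lam φ - a * (lam φ) ^ 2 = 0) ∧
      (Lam φ = -((2 * (n : ℝ) - 2 + φ ^ 2) / (2 * a * φ ^ 2)) * (lam φ) ^ 2) ∧
      (Lam φ < 0) ∧
      (∀ C₁ : ℝ, ∀ ψ : ℝ → ℝ,
        ψ = (fun φ' => (lam φ') ^ 2 *
          (1 / a + C₁ * (2 * (n : ℝ) - 2 - φ' ^ 2) +
            (2 * (n : ℝ) - 2 - φ' ^ 2) / (4 * a * ((n : ℝ) - 1)) *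
              (Real.log (φ' ^ 2) - Real.log (2 * (n : ℝ) - 2 - φ' ^ 2)))) →
        (2 * a * lam φ - 1) * ψ φ - (((n : ℝ) - 1) / φ - φ / 2) * deriv ψ φ = Lam φ) := by
  have hN : (2:ℝ) ≤ (n:ℝ) := by exact_mod_cast hn
  set N := (n:ℝ) with hNdef
  set u : ℝ → ℝ := fun x => 2*N - 2 - x^2 with hu_def
  set g : ℝ → ℝ := fun x => c - a * Real.log (u x) with hg_def
  have hlamg : lam = fun x => -1/(g x) := hlam
  set S : Set ℝ := {x : ℝ | x^2 < 2*N - 2} with hS_def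
  have hSopen : IsOpen S := isOpen_lt (by fun_prop) continuous_const
  have hupos : ∀ x ∈ S, 0 < u x := by
    intro x hx
    have : x^2 < 2*N - 2 := hx
    simp only [hu_def]; linarith
  have hgpos : ∀ x ∈ S, 0 < g x := by
    intro x hx
    have h1 : Real.log (u x) ≤ Real.log (2*N - 2) :=
      Real.log_le_log (hupos x hx) (by simp only [hu_def]; nlinarith [sq_nonneg x])
    have h2 : a * Real.log (u x) ≤ a * Real.log (2*N - 2) :=
      mul_le_mul_of_nonneg_left h1 ha.le
    simp only [hg_def]; linarith
  have hu' : ∀ x : ℝ, HasDerivAt u (-(2*x)) x := by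
    intro x
    have := (hasDerivAt_pow 2 x).const_sub (2*N - 2)
    simpa [hu_def] using this
  have hg' : ∀ x ∈ S, HasDerivAt g (2*a*x/(u x)) x := by
    intro x hx
    have h1 : HasDerivAt (fun y => Real.log (u y)) (-(2*x)/(u x)) x :=
      (hu' x).log (hupos x hx).ne'
    have h2 := (h1.const_mul a).const_sub c
    exact h2.congr_deriv (by ring)
  have hlam' : ∀ x ∈ S, HasDerivAt lam (2*a*x/(u x * (g x)^2)) x := by
    intro x hx
    have hgne : g x ≠ 0 := (hgpos x hx).ne'
    have h1 := ((hg' x hx).inv hgne).neg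
    have heq : lam = fun y => -(g y)⁻¹ := by
      rw [hlamg]; funext y; ring
    rw [heq]
    exact h1.congr_deriv (by ring)
  have hd1 : ∀ x ∈ S, deriv lam x = 2*a*x/(u x * (g x)^2) :=
    fun x hx => (hlam' x hx).deriv
  intro φ hφ hφs
  have hφ2 : φ^2 < 2*N - 2 := by
    have := (Real.lt_sqrt hφ.le).mp hφs
    linarith
  have hSφ : φ ∈ S := hφ2
  have hU : 0 < u φ := hupos φ hSφ
  have hG : 0 < g φ := hgpos φ hSφ
  have hφne : φ ≠ 0 := hφ.ne'
  have hUne : u φ ≠ 0 := hU.ne'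
  have hGne : g φ ≠ 0 := hG.ne'
  have hane : a ≠ 0 := ha.ne'
  have hN1 : (0:ℝ) < N - 1 := by linarith
  have huφ : u φ = 2*N - 2 - φ^2 := rfl
  -- second derivative
  have hd2 : deriv (deriv lam) φ =
      2*a*(u φ * g φ + 2*φ^2*(g φ) - 4*a*φ^2)/((u φ)^2*(g φ)^3) := by
    have heq : deriv lam =ᶠ[𝓝 φ] fun x => 2*a*x/(u x * (g x)^2) := by
      filter_upwards [hSopen.mem_nhds hSφ] with x hx using hd1 x hx
    rw [heq.deriv_eq]
    have hnum : HasDerivAt (fun x : ℝ => 2*a*x) (2*a) φ := by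
      simpa using (hasDerivAt_id φ).const_mul (2*a)
    have hden : HasDerivAt (fun x => u x * (g x)^2)
        (-(2*φ) * (g φ)^2 + u φ * ((2:ℕ) * (g φ)^1 * (2*a*φ/(u φ)))) φ :=
      (hu' φ).mul ((hg' φ hSφ).pow 2)
    have hdne : u φ * (g φ)^2 ≠ 0 := by positivity
    have h := hnum.div hden hdne
    rw [show (fun x => 2*a*x/(u x * (g x)^2)) = ((fun x : ℝ => 2*a*x) / fun x => u x * (g x)^2) from rfl, h.deriv]
    field_simp
    ring
  have hlv : lam φ = -1/(g φ) := by rw [hlamg]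
  have hd1φ : deriv lam φ = 2*a*φ/(u φ * (g φ)^2) := hd1 φ hSφ
  have hii : Lam φ = -((2 * N - 2 + φ ^ 2) / (2 * a * φ ^ 2)) * (lam φ) ^ 2 := by
    rw [hLam]
    simp only
    rw [hd2, hd1φ, hlv, huφ]
    exact lam2_aux_ext a N φ (g φ) hane hφne hGne (huφ ▸ hUne)
  refine ⟨?_, hii, ?_, ?_⟩
  · rw [hd1φ, hlv, huφ]
    have hU' : 2*N - 2 - φ^2 ≠ 0 := huφ ▸ hUne
    field_simp
    linear_combination a * mul_inv_cancel₀ hU'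
  · rw [hii, hlv]
    have h1 : 0 < 2*N - 2 + φ^2 := by nlinarith
    have h2 : (0:ℝ) < (-1/(g φ))^2 := by positivity
    have h3 : 0 < (2 * N - 2 + φ ^ 2) / (2 * a * φ ^ 2) := by positivity
    nlinarith [mul_pos h3 h2]
  · intro C₁ ψ hψ
    have hψg : ψ = fun x => (lam x)^2 *
        (1 / a + C₁ * (u x) + (u x) / (4 * a * (N - 1)) *
          (Real.log (x ^ 2) - Real.log (u x))) := hψ
    set L1 := Real.log (φ^2) with hL1
    set L2 := Real.log (u φ) with hL2
    have hpow : HasDerivAt (fun x => (lam x)^2)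
        ((2:ℕ) * (lam φ)^1 * (2*a*φ/(u φ * (g φ)^2))) φ := (hlam' φ hSφ).pow 2
    have hA : HasDerivAt (fun x => 1/a + C₁ * (u x)) (C₁ * (-(2*φ))) φ :=
      ((hu' φ).const_mul C₁).const_add (1/a)
    have hB : HasDerivAt (fun x => (u x) / (4*a*(N-1))) (-(2*φ)/(4*a*(N-1))) φ :=
      (hu' φ).div_const _
    have hlog1 : HasDerivAt (fun x : ℝ => Real.log (x^2)) ((2:ℕ)*φ^1/(φ^2)) φ :=
      (hasDerivAt_pow 2 φ).log (pow_ne_zero 2 hφne)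
    have hC : HasDerivAt (fun x => Real.log (x^2) - Real.log (u x))
        ((2:ℕ)*φ^1/(φ^2) - -(2*φ)/(u φ)) φ :=
      hlog1.sub ((hu' φ).log hUne)
    have hfull : HasDerivAt ψ
        ((2:ℕ) * (lam φ)^1 * (2*a*φ/(u φ * (g φ)^2)) *
          (1 / a + C₁ * (u φ) + (u φ) / (4 * a * (N - 1)) * (L1 - L2))
         + (lam φ)^2 *
          (C₁ * (-(2*φ)) + ((-(2*φ)/(4*a*(N-1))) * (L1 - L2)
            + (u φ)/(4*a*(N-1)) * ((2:ℕ)*φ^1/(φ^2) - -(2*φ)/(u φ))))) φ := by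
      rw [hψg]
      exact hpow.mul (hA.add (hB.mul hC))
    have hdψ := hfull.deriv
    rw [hdψ, hψg, hii]
    simp only
    rw [hlv]
    rw [show Real.log (φ^2) = L1 from rfl, show Real.log (u φ) = L2 from rfl]
    rw [huφ]
    have hUne' : 2*N - 2 - φ^2 ≠ 0 := huφ ▸ hUne
    linear_combination psi_aux_ext a N φ (g φ) C₁ L1 L2 hane hφne hGne hUne' hN1.ne'
end

section
/- Let n ≥ 2 be an integer, a > 0, R₂ > 0, and c⁺ > c⁻ > a·log(2n−2). Set λ̄±(φ) := −1/(c± − a·log(2n−2−φ²)), and for a fixed constant C₁ > 0 let ψ±(φ) := (λ̄±(φ))²·(1/a + C₁·(2n−2−φ²) + ((2n−2−φ²)/(4a(n−1)))·(log(φ²) − log(2n−2−φ²))), and let b± be any constants. Then there exists τ₄ < ∞ such that λ⁻_ext(φ,τ) < λ⁺_ext(φ,τ) for all R₂·e^{−τ/2} ≤ |φ| < √(2(n−1)) and all τ ≥ τ₄, where λ±_ext(φ,τ) := λ̄±(φ) + b±·e^{−τ}·ψ±(φ). -/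
open Filter Topology

/-- The exterior formal profile `λ̄(φ) = −1/(c − a·log(2n−2−φ²))`. -/
noncomputable def lamBar (n : ℕ) (a c φ : ℝ) : ℝ :=
  -1 / (c - a * Real.log (2 * (n : ℝ) - 2 - φ ^ 2))

/-- The exterior correction term `ψ`. -/
noncomputable def psiCorr (n : ℕ) (a c C₁ φ : ℝ) : ℝ :=
  (lamBar n a c φ) ^ 2 * (1 / a + C₁ * (2 * (n : ℝ) - 2 - φ ^ 2)
    + (2 * (n : ℝ) - 2 - φ ^ 2) / (4 * a * ((n : ℝ) - 1)) *
      (Real.log (φ ^ 2) - Real.log (2 * (n : ℝ) - 2 - φ ^ 2)))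

set_option maxHeartbeats 1000000 in
/-- Ordering of the exterior barriers: if `c⁺ > c⁻ > a·log(2n−2)`, then for
any constants `b±` there is `τ₄` such that `λ⁻_ext(φ,τ) < λ⁺_ext(φ,τ)` for all
`R₂·e^{−τ/2} ≤ |φ| < √(2(n−1))` and `τ ≥ τ₄`, where
`λ±_ext(φ,τ) = λ̄±(φ) + b±·e^{−τ}·ψ±(φ)`. -/
theorem exterior_ordering
    (n : ℕ) (hn : 2 ≤ n) (a : ℝ) (ha : 0 < a)
    (R₂ cp cm C₁ : ℝ) (hR₂ : 0 < R₂)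
    (hcm : a * Real.log (2 * (n : ℝ) - 2) < cm) (hcc : cm < cp)
    (hC₁ : 0 < C₁) (bp bm : ℝ) :
    ∃ τ₄ : ℝ, ∀ φ τ : ℝ, τ₄ ≤ τ → R₂ * Real.exp (-τ / 2) ≤ |φ| →
      |φ| < Real.sqrt (2 * ((n : ℝ) - 1)) →
      lamBar n a cm φ + bm * Real.exp (-τ) * psiCorr n a cm C₁ φ
        < lamBar n a cp φ + bp * Real.exp (-τ) * psiCorr n a cp C₁ φ := by
  simp only [lamBar, psiCorr]
  have hn2 : (2:ℝ) ≤ (n:ℝ) := by exact_mod_cast hn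
  set N : ℝ := 2 * (n:ℝ) - 2 with hNdef
  have hN2 : (2:ℝ) ≤ N := by simp only [hNdef]; linarith only [hn2]
  have hN0 : (0:ℝ) < N := by linarith only [hN2]
  have hn1 : (0:ℝ) < (n:ℝ) - 1 := by linarith only [hn2]
  have hQ : (0:ℝ) < 4 * a * ((n:ℝ) - 1) := by positivity
  set d : ℝ := cp - cm with hddef
  have hd : 0 < d := by simp only [hddef]; linarith only [hcc]
  set δ : ℝ := cm - a * Real.log N with hδdef
  have hδ : 0 < δ := by simp only [hδdef]; linarith only [hcm]
  set M : ℝ := |bm| + |bp| + 1 with hMdef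
  have hM : 0 < M := by positivity
  set A : ℝ := |2 * Real.log R₂| + |Real.log N| with hAdef
  have hA : 0 ≤ A := by positivity
  set K₀ : ℝ := 1 / a + C₁ * N + (N * A + 1 + N ^ 2) / (4 * a * ((n:ℝ) - 1)) with hK₀def
  set K₁ : ℝ := N / (4 * a * ((n:ℝ) - 1)) with hK₁def
  have hK₀ : 0 < K₀ := by simp only [hK₀def]; positivity
  have hK₁ : 0 < K₁ := by simp only [hK₁def]; positivity
  clear_value N d δ M A K₀ K₁
  -- smallness of (K₀ + K₁ τ) e^{-τ}
  have hT : Tendsto (fun τ : ℝ => (K₀ + K₁ * τ) * Real.exp (-τ) * (M * (δ + d)))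
      atTop (𝓝 0) := by
    have t1 := Real.tendsto_exp_neg_atTop_nhds_zero
    have t2 := Real.tendsto_pow_mul_exp_neg_atTop_nhds_zero 1
    have t3 : Tendsto (fun τ : ℝ =>
        (K₀ * Real.exp (-τ) + K₁ * (τ ^ 1 * Real.exp (-τ))) * (M * (δ + d)))
        atTop (𝓝 ((K₀ * 0 + K₁ * 0) * (M * (δ + d)))) :=
      (((t1.const_mul K₀).add (t2.const_mul K₁)).mul_const _)
    have t4 : ((K₀ * 0 + K₁ * 0) * (M * (δ + d))) = 0 := by ring
    rw [t4] at t3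
    exact t3.congr (fun τ => by ring)
  have hev := (hT.eventually_lt_const (show (0:ℝ) < d * δ by positivity)).and
    (eventually_ge_atTop (0:ℝ))
  obtain ⟨τ₄, hτ₄⟩ := eventually_atTop.1 hev
  refine ⟨τ₄, fun φ τ hτ hlo hhi => ?_⟩
  obtain ⟨hsmall, hτ0⟩ := hτ₄ τ hτ
  have hexp : (0:ℝ) < Real.exp (-τ) := Real.exp_pos _
  -- basic facts about φ
  have hφpos : 0 < |φ| := lt_of_lt_of_le (by positivity) hlo
  have hφ2pos : 0 < φ ^ 2 := by
    have := abs_pos.mp hφpos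
    positivity
  have hφ2N : φ ^ 2 < N := by
    calc φ ^ 2 = |φ| ^ 2 := (sq_abs φ).symm
      _ < Real.sqrt (2 * ((n:ℝ) - 1)) ^ 2 :=
          pow_lt_pow_left₀ hhi (abs_nonneg φ) two_ne_zero
      _ = 2 * ((n:ℝ) - 1) := Real.sq_sqrt (by linarith only [hn2])
      _ = N := by simp only [hNdef]; ring
  have hφ2lo : R₂ ^ 2 * Real.exp (-τ) ≤ φ ^ 2 := by
    have h := pow_le_pow_left₀ (by positivity) hlo 2
    rw [sq_abs] at h
    calc R₂ ^ 2 * Real.exp (-τ) = (R₂ * Real.exp (-τ / 2)) ^ 2 := by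
          rw [mul_pow, sq (Real.exp (-τ / 2)), ← Real.exp_add]; ring_nf
      _ ≤ φ ^ 2 := h
  set s : ℝ := N - φ ^ 2 with hsdef
  have hs0 : 0 < s := by simp only [hsdef]; linarith only [hφ2N]
  have hsN : s ≤ N := by simp only [hsdef]; linarith only [hφ2pos]
  set L : ℝ := a * Real.log s with hLdef
  have hLN : L ≤ a * Real.log N :=
    mul_le_mul_of_nonneg_left (Real.log_le_log hs0 hsN) ha.le
  set u : ℝ := cm - L with hudef
  set v : ℝ := cp - L with hvdef
  have hv : v = u + d := by simp only [hudef, hvdef, hddef]; ring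
  have hum : δ ≤ u := by simp only [hudef, hδdef]; linarith only [hLN]
  have hu0 : 0 < u := lt_of_lt_of_le hδ hum
  have hv0 : 0 < v := by rw [hv]; linarith only [hu0, hd]
  have huv : u ≤ v := by rw [hv]; linarith only [hd]
  clear_value s L u v
  -- bound on |log φ²|
  have hlogφ : |Real.log (φ ^ 2)| ≤ A + τ := by
    rw [abs_le]
    constructor
    · have h1 : Real.log (R₂ ^ 2 * Real.exp (-τ)) ≤ Real.log (φ ^ 2) :=
        Real.log_le_log (by positivity) hφ2lo
      rw [Real.log_mul (by positivity) (by positivity), Real.log_exp,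
        Real.log_pow] at h1
      have h2 : -|2 * Real.log R₂| ≤ 2 * Real.log R₂ := neg_abs_le _
      have h3 : (0:ℝ) ≤ |Real.log N| := abs_nonneg _
      simp only [hAdef]
      push_cast at h1
      linarith only [h1, h2, h3]
    · have h1 : Real.log (φ ^ 2) ≤ Real.log N := Real.log_le_log hφ2pos hφ2N.le
      have h2 : Real.log N ≤ |Real.log N| := le_abs_self _
      have h3 : (0:ℝ) ≤ |2 * Real.log R₂| := abs_nonneg _
      simp only [hAdef]
      linarith only [h1, h2, h3, hτ0]
  -- bound on s·|log s|
  have hlogs : s * |Real.log s| ≤ 1 + s ^ 2 := by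
    have h1 : Real.log s ≤ s := by
      have h := Real.log_le_sub_one_of_pos hs0; linarith only [h]
    have h2 : -Real.log s ≤ 1 / s := by
      have h3 := Real.log_le_sub_one_of_pos (show (0:ℝ) < s⁻¹ by positivity)
      rw [Real.log_inv] at h3
      rw [one_div]; linarith only [h3, hs0]
    have hs1 : (0:ℝ) < 1 / s := by positivity
    have h4 : |Real.log s| ≤ 1 / s + s := by
      rw [abs_le]
      constructor
      · linarith only [h1, hs1, h2, hs0]
      · linarith only [h1, hs1]
    calc s * |Real.log s| ≤ s * (1 / s + s) :=
          mul_le_mul_of_nonneg_left h4 hs0.le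
      _ = 1 + s ^ 2 := by field_simp
  -- bound the bracket F
  set F : ℝ := 1 / a + C₁ * s + s / (4 * a * ((n:ℝ) - 1)) *
      (Real.log (φ ^ 2) - Real.log s) with hFdef
  clear_value F
  have hKτ : 0 ≤ K₀ + K₁ * τ := add_nonneg hK₀.le (mul_nonneg hK₁.le hτ0)
  have hFabs : |F| ≤ K₀ + K₁ * τ := by
    have h4 : s * |Real.log (φ ^ 2) - Real.log s| ≤ N * (A + τ) + (1 + s ^ 2) := by
      have h3 : |Real.log (φ ^ 2) - Real.log s| ≤ |Real.log (φ ^ 2)| + |Real.log s| :=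
        abs_sub _ _
      have h5 : s * |Real.log (φ ^ 2)| ≤ N * (A + τ) :=
        mul_le_mul hsN hlogφ (abs_nonneg _) hN0.le
      have h6 : s * |Real.log (φ ^ 2) - Real.log s|
          ≤ s * (|Real.log (φ ^ 2)| + |Real.log s|) :=
        mul_le_mul_of_nonneg_left h3 hs0.le
      have h7 : s * (|Real.log (φ ^ 2)| + |Real.log s|)
          = s * |Real.log (φ ^ 2)| + s * |Real.log s| := by ring
      linarith only [h5, h6, h7.le, h7.ge, hlogs]
    have hsq : s ^ 2 ≤ N ^ 2 := pow_le_pow_left₀ hs0.le hsN 2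
    calc |F| = |1 / a + C₁ * s + s / (4 * a * ((n:ℝ) - 1)) *
          (Real.log (φ ^ 2) - Real.log s)| := by rw [hFdef]
      _ ≤ |1 / a + C₁ * s| + |s / (4 * a * ((n:ℝ) - 1)) *
          (Real.log (φ ^ 2) - Real.log s)| := abs_add_le _ _
      _ = (1 / a + C₁ * s) + s * |Real.log (φ ^ 2) - Real.log s|
            / (4 * a * ((n:ℝ) - 1)) := by
          rw [abs_of_pos (by positivity), abs_mul, abs_div, abs_of_pos hs0,
            abs_of_pos hQ]; ring
      _ ≤ (1 / a + C₁ * N) + (N * (A + τ) + (1 + s ^ 2)) / (4 * a * ((n:ℝ) - 1)) := by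
          gcongr
      _ ≤ (1 / a + C₁ * N) + (N * A + 1 + N ^ 2 + N * τ) / (4 * a * ((n:ℝ) - 1)) := by
          gcongr (1 / a + C₁ * N) + ?_ / (4 * a * ((n:ℝ) - 1))
          linarith only [hsq]
      _ = K₀ + K₁ * τ := by simp only [hK₀def, hK₁def]; ring
  -- bound on the correction terms
  set B : ℝ := (K₀ + K₁ * τ) / u ^ 2 with hBdef
  clear_value B
  have hB0 : 0 ≤ B := by
    have := div_nonneg hKτ (sq_nonneg u)
    simpa [hBdef] using this
  have hψ : ∀ c : ℝ, 0 < c → u ≤ c → |(-1 / c) ^ 2 * F| ≤ B := by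
    intro c hc0 hc
    rw [abs_mul, abs_pow, abs_div, abs_neg, abs_one, abs_of_pos hc0]
    have h1 : (1 / c) ^ 2 ≤ (1 / u) ^ 2 := by gcongr
    calc (1 / c) ^ 2 * |F| ≤ (1 / u) ^ 2 * (K₀ + K₁ * τ) :=
          mul_le_mul h1 hFabs (abs_nonneg _) (by positivity)
      _ = B := by simp only [hBdef]; ring
  have hpm : |(-1 / u) ^ 2 * F| ≤ B := hψ u hu0 le_rfl
  have hpp : |(-1 / v) ^ 2 * F| ≤ B := hψ v hv0 huv
  -- perturbation bound
  have e1 : bm * ((-1 / u) ^ 2 * F) ≤ |bm| * B :=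
    calc bm * ((-1 / u) ^ 2 * F) ≤ |bm * ((-1 / u) ^ 2 * F)| := le_abs_self _
      _ = |bm| * |(-1 / u) ^ 2 * F| := abs_mul _ _
      _ ≤ |bm| * B := mul_le_mul_of_nonneg_left hpm (abs_nonneg _)
  have e2 : -(bp * ((-1 / v) ^ 2 * F)) ≤ |bp| * B :=
    calc -(bp * ((-1 / v) ^ 2 * F)) ≤ |bp * ((-1 / v) ^ 2 * F)| := neg_le_abs _
      _ = |bp| * |(-1 / v) ^ 2 * F| := abs_mul _ _
      _ ≤ |bp| * B := mul_le_mul_of_nonneg_left hpp (abs_nonneg _)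
  have e3 : bm * ((-1 / u) ^ 2 * F) - bp * ((-1 / v) ^ 2 * F) ≤ M * B := by
    have h7 : (|bm| + |bp|) * B ≤ M * B :=
      mul_le_mul_of_nonneg_right (by simp only [hMdef]; linarith only []) hB0
    have h8 : (|bm| + |bp|) * B = |bm| * B + |bp| * B := by ring
    linarith only [e1, e2, h7, h8.le, h8.ge]
  have hpert : bm * Real.exp (-τ) * ((-1 / u) ^ 2 * F)
      - bp * Real.exp (-τ) * ((-1 / v) ^ 2 * F) ≤ Real.exp (-τ) * (M * B) := by
    calc bm * Real.exp (-τ) * ((-1 / u) ^ 2 * F)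
          - bp * Real.exp (-τ) * ((-1 / v) ^ 2 * F)
        = Real.exp (-τ) * (bm * ((-1 / u) ^ 2 * F) - bp * ((-1 / v) ^ 2 * F)) := by
          ring
      _ ≤ Real.exp (-τ) * (M * B) := mul_le_mul_of_nonneg_left e3 hexp.le
  -- the gap beats the perturbation
  set X : ℝ := Real.exp (-τ) * M * (K₀ + K₁ * τ) with hXdef
  clear_value X
  have hX0 : 0 ≤ X := by
    have := mul_nonneg (mul_nonneg hexp.le hM.le) hKτ
    simpa [hXdef] using this
  have s1 : X * (δ + d) < d * δ := by
    calc X * (δ + d) = (K₀ + K₁ * τ) * Real.exp (-τ) * (M * (δ + d)) := by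
          simp only [hXdef]; ring
      _ < d * δ := hsmall
  have s2 : X * (u + d) < d * u := by
    have p1 := mul_lt_mul_of_pos_left s1 hu0
    have p2 := mul_nonneg (mul_nonneg hX0 hd.le) (sub_nonneg.mpr hum)
    nlinarith only [p1, p2, hδ, hX0, hd, hum, hu0]
  have s3 : X * (u * v) < d * u ^ 2 := by
    rw [hv]
    have p1 := mul_lt_mul_of_pos_left s2 hu0
    linarith only [p1]
  have hfin : Real.exp (-τ) * (M * B) < -1 / v - (-1 / u) := by
    have hu' : u ≠ 0 := ne_of_gt hu0
    have hv' : v ≠ 0 := ne_of_gt hv0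
    have hgap : -1 / v - (-1 / u) = d / (u * v) := by
      rw [hv] at hv' ⊢
      rw [div_sub_div _ _ hv' hu',
        div_eq_div_iff (mul_ne_zero hv' hu') (mul_ne_zero hu' hv')]
      ring
    have hlt : X / u ^ 2 < d / (u * v) := by
      rw [div_lt_div_iff₀ (by positivity) (by positivity)]
      linarith only [s3]
    calc Real.exp (-τ) * (M * B) = X / u ^ 2 := by
          simp only [hBdef, hXdef]; ring
      _ < d / (u * v) := hlt
      _ = -1 / v - (-1 / u) := hgap.symm
  linarith only [hpert, hfin]
end

section
/- Let n ≥ 2 be an integer and let u = u(x,t) be a smooth positive solution of u_t = u_xx/(1+u_x²) − (n−1)/u on an open subset of ℝ². Set ℜ := −u·u_xx/(1+u_x²). Then ℜ = (1−n) − u·u_t, and ℜ satisfies the evolution equation ℜ_t = ℜ_xx/(1+u_x²) − (2u_x/(u(1+u_x²)))·(1−ℜ)·ℜ_x + (2u_x²/(u²(1+u_x²)))·[(1−ℜ²) + (n−2)(1−ℜ)]. -/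
open Filter Topology Set

noncomputable def px (g : ℝ × ℝ → ℝ) (p : ℝ × ℝ) : ℝ := fderiv ℝ g p (1, 0)
noncomputable def pt (g : ℝ × ℝ → ℝ) (p : ℝ × ℝ) : ℝ := fderiv ℝ g p (0, 1)

lemma contDiffAt_px {g : ℝ × ℝ → ℝ} {p : ℝ × ℝ} (hg : ContDiffAt ℝ (⊤ : ℕ∞) g p) :
    ContDiffAt ℝ (⊤ : ℕ∞) (px g) p :=
  (hg.fderiv_right (by simp)).clm_apply contDiffAt_const

lemma contDiffAt_pt {g : ℝ × ℝ → ℝ} {p : ℝ × ℝ} (hg : ContDiffAt ℝ (⊤ : ℕ∞) g p) :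
    ContDiffAt ℝ (⊤ : ℕ∞) (pt g) p :=
  (hg.fderiv_right (by simp)).clm_apply contDiffAt_const

lemma hasDerivAt_sx {g : ℝ × ℝ → ℝ} {p : ℝ × ℝ} (hg : DifferentiableAt ℝ g p) :
    HasDerivAt (fun x => g (x, p.2)) (px g p) p.1 := by
  have h1 : HasDerivAt (fun x : ℝ => ((x, p.2) : ℝ × ℝ)) (1, 0) p.1 :=
    HasDerivAt.prodMk (hasDerivAt_id _) (hasDerivAt_const _ _)
  exact hg.hasFDerivAt.comp_hasDerivAt p.1 h1

lemma hasDerivAt_st {g : ℝ × ℝ → ℝ} {p : ℝ × ℝ} (hg : DifferentiableAt ℝ g p) :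
    HasDerivAt (fun t => g (p.1, t)) (pt g p) p.2 := by
  have h1 : HasDerivAt (fun t : ℝ => ((p.1, t) : ℝ × ℝ)) (0, 1) p.2 :=
    HasDerivAt.prodMk (hasDerivAt_const _ _) (hasDerivAt_id _)
  exact hg.hasFDerivAt.comp_hasDerivAt p.2 h1

lemma clairaut {g : ℝ × ℝ → ℝ} {p : ℝ × ℝ} (hg : ContDiffAt ℝ (⊤ : ℕ∞) g p) :
    pt (px g) p = px (pt g) p := by
  have hsym : IsSymmSndFDerivAt ℝ g p := hg.isSymmSndFDerivAt (by
    rw [minSmoothness_of_isRCLikeNormedField]; exact (show ((2:ℕ∞) : WithTop ℕ∞) ≤ ((⊤:ℕ∞) : WithTop ℕ∞) from WithTop.coe_le_coe.mpr le_top))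
  have hdx : DifferentiableAt ℝ (fderiv ℝ g) p :=
    (hg.fderiv_right (m := 1) (WithTop.coe_le_coe.mpr le_top)).differentiableAt one_ne_zero
  have e1 : fderiv ℝ (fun q => fderiv ℝ g q (1, 0)) p
      = (fderiv ℝ (fderiv ℝ g) p).flip (1, 0) := by
    rw [fderiv_clm_apply hdx (differentiableAt_const _)]
    simp
  have e2 : fderiv ℝ (fun q => fderiv ℝ g q (0, 1)) p
      = (fderiv ℝ (fderiv ℝ g) p).flip (0, 1) := by
    rw [fderiv_clm_apply hdx (differentiableAt_const _)]
    simp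
  show fderiv ℝ (fun q => fderiv ℝ g q (1,0)) p (0,1)
      = fderiv ℝ (fun q => fderiv ℝ g q (0,1)) p (1,0)
  rw [e1, e2]
  exact hsym _ _

/-- Spatial derivative `u_x` of a profile function `u(x,t)`. -/
noncomputable def uX (u : ℝ → ℝ → ℝ) (x t : ℝ) : ℝ := deriv (fun x' => u x' t) x

/-- Second spatial derivative `u_xx`. -/
noncomputable def uXX (u : ℝ → ℝ → ℝ) (x t : ℝ) : ℝ := deriv (deriv (fun x' => u x' t)) x

/-- Time derivative `u_t`. -/
noncomputable def uT (u : ℝ → ℝ → ℝ) (x t : ℝ) : ℝ := deriv (fun t' => u x t') t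

/-- The curvature ratio `ℜ = κ_n/κ₁ = −u·u_xx/(1+u_x²)`. -/
noncomputable def ratioR (u : ℝ → ℝ → ℝ) (x t : ℝ) : ℝ :=
  -(u x t) * uXX u x t / (1 + (uX u x t) ^ 2)

set_option maxHeartbeats 4000000 in
/-- For a smooth positive solution of the graphical mean curvature flow
`u_t = u_xx/(1+u_x²) − (n−1)/u` on an open subset of `ℝ²`, the ratio
`ℜ = −u·u_xx/(1+u_x²)` satisfies `ℜ = (1−n) − u·u_t` and the evolution equation
`ℜ_t = ℜ_xx/(1+u_x²) − (2u_x/(u(1+u_x²)))(1−ℜ)ℜ_x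
  + (2u_x²/(u²(1+u_x²)))[(1−ℜ²) + (n−2)(1−ℜ)]`. -/
theorem ratio_evolution_equation
    (n : ℕ) (hn : 2 ≤ n) (U : Set (ℝ × ℝ)) (hU : IsOpen U)
    (u : ℝ → ℝ → ℝ) (hsmooth : ContDiffOn ℝ (⊤ : ℕ∞) (Function.uncurry u) U)
    (hpos : ∀ p ∈ U, 0 < u p.1 p.2)
    (hPDE : ∀ p ∈ U, uT u p.1 p.2 =
      uXX u p.1 p.2 / (1 + (uX u p.1 p.2) ^ 2) - ((n : ℝ) - 1) / u p.1 p.2) :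
    ∀ p ∈ U,
      ratioR u p.1 p.2 = (1 - (n : ℝ)) - u p.1 p.2 * uT u p.1 p.2 ∧
      deriv (fun t => ratioR u p.1 t) p.2 =
        deriv (deriv (fun x => ratioR u x p.2)) p.1 / (1 + (uX u p.1 p.2) ^ 2)
          - 2 * uX u p.1 p.2 / (u p.1 p.2 * (1 + (uX u p.1 p.2) ^ 2)) *
              (1 - ratioR u p.1 p.2) * deriv (fun x => ratioR u x p.2) p.1
          + 2 * (uX u p.1 p.2) ^ 2 / ((u p.1 p.2) ^ 2 * (1 + (uX u p.1 p.2) ^ 2)) *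
              ((1 - (ratioR u p.1 p.2) ^ 2) + ((n : ℝ) - 2) * (1 - ratioR u p.1 p.2)) := by
  intro p hp
  set f : ℝ × ℝ → ℝ := Function.uncurry u with hfdef
  set N : ℝ := (n : ℝ) with hNdef
  have hC : ∀ q ∈ U, ContDiffAt ℝ (⊤ : ℕ∞) f q := fun q hq => hsmooth.contDiffAt (hU.mem_nhds hq)
  have hC1 : ∀ q ∈ U, ContDiffAt ℝ (⊤ : ℕ∞) (px f) q := fun q hq => contDiffAt_px (hC q hq)
  have hC2 : ∀ q ∈ U, ContDiffAt ℝ (⊤ : ℕ∞) (px (px f)) q := fun q hq => contDiffAt_px (hC1 q hq)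
  have hC3 : ∀ q ∈ U, ContDiffAt ℝ (⊤ : ℕ∞) (px (px (px f))) q := fun q hq => contDiffAt_px (hC2 q hq)
  have hCw : ∀ q ∈ U, ContDiffAt ℝ (⊤ : ℕ∞) (pt f) q := fun q hq => contDiffAt_pt (hC q hq)
  have hCw1 : ∀ q ∈ U, ContDiffAt ℝ (⊤ : ℕ∞) (px (pt f)) q := fun q hq => contDiffAt_px (hCw q hq)
  have Dx0 : ∀ q ∈ U, HasDerivAt (fun x => f (x, q.2)) (px f q) q.1 :=
    fun q hq => hasDerivAt_sx ((hC q hq).differentiableAt (by simp))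
  have Dx1 : ∀ q ∈ U, HasDerivAt (fun x => px f (x, q.2)) (px (px f) q) q.1 :=
    fun q hq => hasDerivAt_sx ((hC1 q hq).differentiableAt (by simp))
  have Dx2 : ∀ q ∈ U, HasDerivAt (fun x => px (px f) (x, q.2)) (px (px (px f)) q) q.1 :=
    fun q hq => hasDerivAt_sx ((hC2 q hq).differentiableAt (by simp))
  have Dx3 : ∀ q ∈ U, HasDerivAt (fun x => px (px (px f)) (x, q.2)) (px (px (px (px f))) q) q.1 :=
    fun q hq => hasDerivAt_sx ((hC3 q hq).differentiableAt (by simp))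
  have DxW : ∀ q ∈ U, HasDerivAt (fun x => pt f (x, q.2)) (px (pt f) q) q.1 :=
    fun q hq => hasDerivAt_sx ((hCw q hq).differentiableAt (by simp))
  have DxW1 : ∀ q ∈ U, HasDerivAt (fun x => px (pt f) (x, q.2)) (px (px (pt f)) q) q.1 :=
    fun q hq => hasDerivAt_sx ((hCw1 q hq).differentiableAt (by simp))
  have Dt0 : ∀ q ∈ U, HasDerivAt (fun t => f (q.1, t)) (pt f q) q.2 :=
    fun q hq => hasDerivAt_st ((hC q hq).differentiableAt (by simp))
  have Dt1 : ∀ q ∈ U, HasDerivAt (fun t => px f (q.1, t)) (pt (px f) q) q.2 :=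
    fun q hq => hasDerivAt_st ((hC1 q hq).differentiableAt (by simp))
  have Dt2 : ∀ q ∈ U, HasDerivAt (fun t => px (px f) (q.1, t)) (pt (px (px f)) q) q.2 :=
    fun q hq => hasDerivAt_st ((hC2 q hq).differentiableAt (by simp))
  have hxq : ∀ q ∈ U, ∀ᶠ x in 𝓝 q.1, ((x, q.2) : ℝ × ℝ) ∈ U := by
    intro q hq
    have hop : IsOpen {x : ℝ | ((x, q.2) : ℝ × ℝ) ∈ U} :=
      hU.preimage (continuous_id.prodMk continuous_const)
    exact eventually_of_mem (hop.mem_nhds hq) fun x hx => hx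
  have htp : ∀ᶠ t in 𝓝 p.2, ((p.1, t) : ℝ × ℝ) ∈ U := by
    have hop : IsOpen {t : ℝ | ((p.1, t) : ℝ × ℝ) ∈ U} :=
      hU.preimage (continuous_const.prodMk continuous_id)
    exact eventually_of_mem (hop.mem_nhds hp) fun t ht => ht
  have hpq : ∀ᶠ q in 𝓝 p, q ∈ U := eventually_of_mem (hU.mem_nhds hp) fun q hq => hq
  have huX : ∀ q ∈ U, uX u q.1 q.2 = px f q := fun q hq => (Dx0 q hq).deriv
  have huXX : ∀ q ∈ U, uXX u q.1 q.2 = px (px f) q := by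
    intro q hq
    have hev : deriv (fun x' => u x' q.2) =ᶠ[𝓝 q.1] fun x => px f (x, q.2) := by
      filter_upwards [hxq q hq] with x hx
      exact huX (x, q.2) hx
    show deriv (deriv fun x' => u x' q.2) q.1 = _
    rw [hev.deriv_eq]
    exact (Dx1 q hq).deriv
  have huT : ∀ q ∈ U, uT u q.1 q.2 = pt f q := fun q hq => (Dt0 q hq).deriv
  have ha : ∀ q ∈ U, f q ≠ 0 := fun q hq => ne_of_gt (hpos q hq)
  have hQ : ∀ q : ℝ × ℝ, (1 : ℝ) + (px f q) ^ 2 ≠ 0 := fun q => by positivity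
  have hw : ∀ q ∈ U, pt f q
      = px (px f) q / (1 + (px f q) ^ 2) - (N - 1) / f q := by
    intro q hq
    rw [← huT q hq, ← huXX q hq, ← huX q hq]
    exact hPDE q hq
  have hw1 : ∀ q ∈ U, px (pt f) q
      = px (px (px f)) q / (1 + (px f q) ^ 2)
        - 2 * px f q * (px (px f) q) ^ 2 / (1 + (px f q) ^ 2) ^ 2
        + (N - 1) * px f q / (f q) ^ 2 := by
    intro q hq
    have hE : HasDerivAt
        (fun x => px (px f) (x, q.2) / (1 + (px f (x, q.2)) ^ 2) - (N - 1) / f (x, q.2))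
        (px (px (px f)) q / (1 + (px f q) ^ 2)
          - 2 * px f q * (px (px f) q) ^ 2 / (1 + (px f q) ^ 2) ^ 2
          + (N - 1) * px f q / (f q) ^ 2) q.1 := by
      have hden : HasDerivAt (fun x => 1 + (px f (x, q.2)) ^ 2)
          (2 * px f q * px (px f) q) q.1 := by
        have := ((Dx1 q hq).fun_pow 2).const_add (1 : ℝ)
        exact this.congr_deriv (by ring)
      have hd := (Dx2 q hq).fun_div hden (hQ q)
      have hc := (hasDerivAt_const q.1 (N - 1)).fun_div (Dx0 q hq) (ha q hq)
      have htot := hd.fun_sub hc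
      refine htot.congr_deriv ?_
      simp only [Prod.mk.eta]
      field_simp
      ring
    have hev : (fun x => pt f (x, q.2)) =ᶠ[𝓝 q.1]
        fun x => px (px f) (x, q.2) / (1 + (px f (x, q.2)) ^ 2) - (N - 1) / f (x, q.2) := by
      filter_upwards [hxq q hq] with x hx
      exact hw (x, q.2) hx
    exact (DxW q hq).unique (hE.congr_of_eventuallyEq hev)
  have hw2 : px (px (pt f)) p
      = px (px (px (px f))) p / (1 + (px f p) ^ 2)
        - 6 * px f p * px (px f) p * px (px (px f)) p / (1 + (px f p) ^ 2) ^ 2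
        - 2 * (px (px f) p) ^ 3 / (1 + (px f p) ^ 2) ^ 2
        + 8 * (px f p) ^ 2 * (px (px f) p) ^ 3 / (1 + (px f p) ^ 2) ^ 3
        + (N - 1) * (px (px f) p * f p - 2 * (px f p) ^ 2) / (f p) ^ 3 := by
    have hden : HasDerivAt (fun x => 1 + (px f (x, p.2)) ^ 2)
        (2 * px f p * px (px f) p) p.1 := by
      have := ((Dx1 p hp).fun_pow 2).const_add (1 : ℝ)
      exact this.congr_deriv (by ring)
    have hden2 : HasDerivAt (fun x => (1 + (px f (x, p.2)) ^ 2) ^ 2)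
        (2 * (1 + (px f p) ^ 2) ^ 1 * (2 * px f p * px (px f) p)) p.1 := by
      have := hden.fun_pow 2
      exact this.congr_deriv (by ring)
    have hQ2 : ((1 : ℝ) + (px f p) ^ 2) ^ 2 ≠ 0 := pow_ne_zero _ (hQ p)
    have ha0 : f p ≠ 0 := ha p hp
    have hQ0 : (1 : ℝ) + (px f p) ^ 2 ≠ 0 := hQ p
    have ha2 : (f p) ^ 2 ≠ 0 := pow_ne_zero _ (ha p hp)
    have hE : HasDerivAt
        (fun x => px (px (px f)) (x, p.2) / (1 + (px f (x, p.2)) ^ 2)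
          - 2 * px f (x, p.2) * (px (px f) (x, p.2)) ^ 2 / (1 + (px f (x, p.2)) ^ 2) ^ 2
          + (N - 1) * px f (x, p.2) / (f (x, p.2)) ^ 2)
        (px (px (px (px f))) p / (1 + (px f p) ^ 2)
          - 6 * px f p * px (px f) p * px (px (px f)) p / (1 + (px f p) ^ 2) ^ 2
          - 2 * (px (px f) p) ^ 3 / (1 + (px f p) ^ 2) ^ 2
          + 8 * (px f p) ^ 2 * (px (px f) p) ^ 3 / (1 + (px f p) ^ 2) ^ 3
          + (N - 1) * (px (px f) p * f p - 2 * (px f p) ^ 2) / (f p) ^ 3) p.1 := by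
      have t1 := (Dx3 p hp).fun_div hden (hQ p)
      have hnum2 := ((Dx1 p hp).const_mul (2 : ℝ)).fun_mul ((Dx2 p hp).fun_pow 2)
      have t2 := hnum2.fun_div hden2 hQ2
      have hnum3 := (Dx1 p hp).const_mul (N - 1)
      have hden3 : HasDerivAt (fun x => (f (x, p.2)) ^ 2)
          (2 * (f p) ^ 1 * px f p) p.1 := (Dx0 p hp).fun_pow 2
      have t3 := hnum3.fun_div hden3 ha2
      have htot := (t1.fun_sub t2).fun_add t3
      refine htot.congr_deriv ?_
      simp only [Prod.mk.eta]
      field_simp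
      ring
    have hev : (fun x => px (pt f) (x, p.2)) =ᶠ[𝓝 p.1]
        fun x => px (px (px f)) (x, p.2) / (1 + (px f (x, p.2)) ^ 2)
          - 2 * px f (x, p.2) * (px (px f) (x, p.2)) ^ 2 / (1 + (px f (x, p.2)) ^ 2) ^ 2
          + (N - 1) * px f (x, p.2) / (f (x, p.2)) ^ 2 := by
      filter_upwards [hxq p hp] with x hx
      exact hw1 (x, p.2) hx
    exact (DxW1 p hp).unique (hE.congr_of_eventuallyEq hev)
  have hmix1 : ∀ q ∈ U, pt (px f) q = px (pt f) q := fun q hq => clairaut (hC q hq)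
  have hmix2 : pt (px (px f)) p = px (px (pt f)) p := by
    have h1 : pt (px (px f)) p = px (pt (px f)) p := clairaut (hC1 p hp)
    have hev : pt (px f) =ᶠ[𝓝 p] px (pt f) := by
      filter_upwards [hpq] with q hq
      exact hmix1 q hq
    have h2 : px (pt (px f)) p = px (px (pt f)) p := by
      show fderiv ℝ (pt (px f)) p (1, 0) = fderiv ℝ (px (pt f)) p (1, 0)
      rw [hev.fderiv_eq]
    rw [h1, h2]
  have hR : ∀ q ∈ U, ratioR u q.1 q.2 = -(f q) * px (px f) q / (1 + (px f q) ^ 2) := by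
    intro q hq
    show -(u q.1 q.2) * uXX u q.1 q.2 / (1 + (uX u q.1 q.2) ^ 2) = _
    rw [huXX q hq, huX q hq]
    rfl
  have hRx : ∀ q ∈ U, deriv (fun x => ratioR u x q.2) q.1
      = -(px f q * px (px f) q + f q * px (px (px f)) q) / (1 + (px f q) ^ 2)
        + 2 * f q * px f q * (px (px f) q) ^ 2 / (1 + (px f q) ^ 2) ^ 2 := by
    intro q hq
    have hev : (fun x => ratioR u x q.2) =ᶠ[𝓝 q.1]
        fun x => -(f (x, q.2)) * px (px f) (x, q.2) / (1 + (px f (x, q.2)) ^ 2) := by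
      filter_upwards [hxq q hq] with x hx
      exact hR (x, q.2) hx
    rw [hev.deriv_eq]
    have hden : HasDerivAt (fun x => 1 + (px f (x, q.2)) ^ 2)
        (2 * px f q * px (px f) q) q.1 := by
      have := ((Dx1 q hq).fun_pow 2).const_add (1 : ℝ)
      exact this.congr_deriv (by ring)
    have hnum := (Dx0 q hq).fun_neg.fun_mul (Dx2 q hq)
    have htot := hnum.fun_div hden (hQ q)
    rw [htot.deriv]
    field_simp
    ring
  have hRxx : deriv (deriv (fun x => ratioR u x p.2)) p.1
      = -((px (px f) p) ^ 2 + 2 * px f p * px (px (px f)) p + f p * px (px (px (px f))) p)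
            / (1 + (px f p) ^ 2)
        + (2 * px f p * px (px f) p * (px f p * px (px f) p + f p * px (px (px f)) p)
            + 2 * (px f p) ^ 2 * (px (px f) p) ^ 2 + 2 * f p * (px (px f) p) ^ 3
            + 4 * f p * px f p * px (px f) p * px (px (px f)) p) / (1 + (px f p) ^ 2) ^ 2
        - 8 * f p * (px f p) ^ 2 * (px (px f) p) ^ 3 / (1 + (px f p) ^ 2) ^ 3 := by
    have hev : deriv (fun x => ratioR u x p.2) =ᶠ[𝓝 p.1]
        fun x => -(px f (x, p.2) * px (px f) (x, p.2) + f (x, p.2) * px (px (px f)) (x, p.2))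
            / (1 + (px f (x, p.2)) ^ 2)
          + 2 * f (x, p.2) * px f (x, p.2) * (px (px f) (x, p.2)) ^ 2
            / (1 + (px f (x, p.2)) ^ 2) ^ 2 := by
      filter_upwards [hxq p hp] with x hx
      exact hRx (x, p.2) hx
    rw [hev.deriv_eq]
    have hden : HasDerivAt (fun x => 1 + (px f (x, p.2)) ^ 2)
        (2 * px f p * px (px f) p) p.1 := by
      have := ((Dx1 p hp).fun_pow 2).const_add (1 : ℝ)
      exact this.congr_deriv (by ring)
    have hden2 : HasDerivAt (fun x => (1 + (px f (x, p.2)) ^ 2) ^ 2)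
        (2 * (1 + (px f p) ^ 2) ^ 1 * (2 * px f p * px (px f) p)) p.1 := hden.fun_pow 2
    have hQ2 : ((1 : ℝ) + (px f p) ^ 2) ^ 2 ≠ 0 := pow_ne_zero _ (hQ p)
    have hnum1 := (((Dx1 p hp).fun_mul (Dx2 p hp)).fun_add ((Dx0 p hp).fun_mul (Dx3 p hp))).fun_neg
    have hnum2 := (((Dx0 p hp).const_mul (2 : ℝ)).fun_mul (Dx1 p hp)).fun_mul ((Dx2 p hp).fun_pow 2)
    have htot := (hnum1.fun_div hden (hQ p)).fun_add (hnum2.fun_div hden2 hQ2)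
    rw [htot.deriv]
    field_simp
    ring
  have hRt : deriv (fun t => ratioR u p.1 t) p.2
      = ((-(pt f p) * px (px f) p + -(f p) * pt (px (px f)) p) * (1 + (px f p) ^ 2)
          - -(f p) * px (px f) p * (2 * px f p * pt (px f) p)) / (1 + (px f p) ^ 2) ^ 2 := by
    have hev : (fun t => ratioR u p.1 t) =ᶠ[𝓝 p.2]
        fun t => -(f (p.1, t)) * px (px f) (p.1, t) / (1 + (px f (p.1, t)) ^ 2) := by
      filter_upwards [htp] with t ht
      exact hR (p.1, t) ht
    rw [hev.deriv_eq]
    have hden : HasDerivAt (fun t => 1 + (px f (p.1, t)) ^ 2)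
        (2 * px f p * pt (px f) p) p.2 := by
      have := ((Dt1 p hp).fun_pow 2).const_add (1 : ℝ)
      exact this.congr_deriv (by ring)
    have hnum := (Dt0 p hp).fun_neg.fun_mul (Dt2 p hp)
    have htot := hnum.fun_div hden (hQ p)
    rw [htot.deriv]
  have hfp : u p.1 p.2 = f p := rfl
  have haN : f p ≠ 0 := ha p hp
  have hQp : (1 : ℝ) + (px f p) ^ 2 ≠ 0 := hQ p
  constructor
  · rw [hfp, hR p hp, huT p hp, hw p hp]
    field_simp
    ring
  · rw [hfp, hRt, hRxx, hRx p hp, hR p hp, huX p hp, hmix1 p hp, hmix2, hw1 p hp, hw2,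
      hw p hp]
    field_simp
    ring
end
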